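/- arXiv:2507.18097 — 4 statements merged into one kernel-verified Lean document; each statement's English description precedes it below -/
import Mathlib

section
/- For every finitely supported function m : ℕ+ →₀ ℕ, the number of ordered trees of type m equals the hyper-Catalan number C_m. -/
/-- Ordered trees: a root node with an ordered (possibly empty) list of children. -/
inductive OrderedTree : Type
  | node : List OrderedTree → OrderedTree

namespace OrderedTree

/-- The list of children of the root of an ordered tree. -/
def children : OrderedTree → List OrderedTree
  | node ts => ts

/-- A node is a leaf if it has no children. -/
def isLeaf : OrderedTree → Bool
  | node ts => ts.isEmpty

/-- The number of nodes of a tree having exactly `n` children. -/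
def countDeg (n : ℕ) : OrderedTree → ℕ
  | node ts => (if ts.length = n then 1 else 0) + (ts.attach.map fun t => countDeg n t.1).sum
  decreasing_by simp [OrderedTree.node.sizeOf_spec]; exact Nat.lt_add_left 1 (List.sizeOf_lt_of_mem t.2)

/-- The post-order traversal of an ordered tree: the post-order traversals of the
subtrees, in order, followed by the root. -/
def postorder : OrderedTree → List OrderedTree
  | node ts => (ts.attach.map fun t => postorder t.1).flatten ++ [node ts]
  decreasing_by simp [OrderedTree.node.sizeOf_spec]; exact Nat.lt_add_left 1 (List.sizeOf_lt_of_mem t.2)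

end OrderedTree

/-- An ordered tree has type `m : ℕ+ →₀ ℕ` if for every `n ≥ 1` it has exactly
`m n` nodes with exactly `n` children. -/
def hasType (τ : OrderedTree) (m : ℕ+ →₀ ℕ) : Prop :=
  ∀ n : ℕ+, OrderedTree.countDeg (n : ℕ) τ = m n

/-- The hyper-Catalan number
`C_m = (Σ n·m n)! / ((1 + Σ (n−1)·m n)! · Π (m n)!)`. -/
def hyperCatalan (m : ℕ+ →₀ ℕ) : ℕ :=
  (m.sum fun n k => (n : ℕ) * k).factorial /
    ((1 + m.sum fun n k => ((n : ℕ) - 1) * k).factorial * m.prod fun _ k => k.factorial)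

/-- `treeCount m` is the number of ordered trees of type `m`. -/
noncomputable def treeCount (m : ℕ+ →₀ ℕ) : ℕ :=
  Nat.card {τ : OrderedTree // hasType τ m}


namespace HC

/-- Prefix condition for Łukasiewicz words (preorder degree codes). -/
def GoodP (w : List ℕ) : Prop := ∀ p, p <+: w → p ≠ w → p.length ≤ p.sum

def Valid (w : List ℕ) : Prop := w.length = w.sum + 1 ∧ GoodP w

lemma prefix_append_cases {α : Type*} {p a b : List α} (h : p <+: a ++ b) :
    p <+: a ∨ ∃ q, p = a ++ q ∧ q <+: b := by
  rcases le_or_gt p.length a.length with hle | hlt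
  · exact Or.inl (List.prefix_of_prefix_length_le h (List.prefix_append a b) hle)
  · right
    have hap : a <+: p := List.prefix_of_prefix_length_le (List.prefix_append a b) h hlt.le
    obtain ⟨q, rfl⟩ := hap
    obtain ⟨s, hs⟩ := h
    rw [List.append_assoc] at hs
    exact ⟨q, rfl, ⟨s, List.append_cancel_left hs⟩⟩

lemma flatten_len_sum {ls : List (List ℕ)} (h : ∀ l ∈ ls, Valid l) :
    ls.flatten.length = ls.flatten.sum + ls.length := by
  induction ls with
  | nil => simp
  | cons a rest ih =>
    simp only [List.flatten_cons, List.length_append, List.sum_append, List.length_cons]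
    have ha := (h a (by simp)).1
    have := ih (fun l hl => h l (by simp [hl]))
    omega

lemma prefix_flatten_lt {ls : List (List ℕ)} (h : ∀ l ∈ ls, Valid l) :
    ∀ p, p <+: ls.flatten → p ≠ ls.flatten → p.length < p.sum + ls.length := by
  induction ls with
  | nil => intro p hp hne; simp at hp; exact absurd hp (by simpa using hne)
  | cons a rest ih =>
    intro p hp hne
    simp only [List.flatten_cons] at hp hne
    rcases prefix_append_cases hp with hpa | ⟨q, rfl, hq⟩
    · rcases eq_or_ne p a with rfl | hpa'
      · have ha := (h p (by simp)).1
        rcases rest with _ | ⟨x, rest⟩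
        · simp at hne
        · simp only [List.length_cons]
          omega
      · have := (h a (by simp)).2 p hpa hpa'
        simp only [List.length_cons]
        omega
    · rcases eq_or_ne q rest.flatten with rfl | hq'
      · exact absurd rfl hne
      · have hiq := ih (fun l hl => h l (by simp [hl])) q hq hq'
        have ha := (h a (by simp)).1
        simp only [List.length_append, List.sum_append, List.length_cons]
        omega

lemma split_blocks : ∀ (n : ℕ) (w : List ℕ), w.length = w.sum + n →
    (∀ p, p <+: w → p ≠ w → p.length < p.sum + n) →
    ∃ ls : List (List ℕ), ls.length = n ∧ (∀ l ∈ ls, Valid l) ∧ ls.flatten = w := by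
  intro n
  induction n with
  | zero =>
    intro w hlen hpref
    rcases List.eq_nil_or_concat w with rfl | ⟨_, _, rfl⟩
    · exact ⟨[], rfl, by simp, rfl⟩
    · have := hpref [] (by simp) (by simp)
      simp at this
  | succ n ih =>
    intro w hlen hpref
    have hwne : w ≠ [] := by
      rintro rfl; simp at hlen
    have hP : ∃ k, (w.take k).sum + 1 ≤ k := by
      refine ⟨w.length, ?_⟩
      simp only [List.take_length]
      omega
    classical
    set N := Nat.find hP with hN
    have hNspec : (w.take N).sum + 1 ≤ N := Nat.find_spec hP
    have hNmin : ∀ j < N, j ≤ (w.take j).sum := by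
      intro j hj
      have := Nat.find_min hP hj
      omega
    have hNle : N ≤ w.length := by
      by_contra hc
      push_neg at hc
      have h1 := hNmin w.length hc
      simp only [List.take_length] at h1
      omega
    have hN1 : 1 ≤ N := by
      rcases Nat.eq_zero_or_pos N with h0 | h
      · rw [h0] at hNspec; simp at hNspec
      · exact h
    -- N = (take N).sum + 1 exactly
    have hNeq : N = (w.take N).sum + 1 := by
      have h1 : N - 1 ≤ (w.take (N-1)).sum := hNmin (N-1) (by omega)
      have h2 : (w.take (N-1)).sum ≤ (w.take N).sum := by
        have hlt : N - 1 < w.length := by omega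
        have hs := List.sum_take_succ w (N-1) hlt
        have he : N - 1 + 1 = N := by omega
        rw [he] at hs
        omega
      omega
    set p := w.take N with hp
    set r := w.drop N with hr
    have hpr : p ++ r = w := List.take_append_drop N w
    have hplen : p.length = N := by simp [hp, hNle]
    have hpvalid : Valid p := by
      constructor
      · rw [hplen]; omega
      · intro q hq hqne
        have hqlen : q.length < N := by
          have := hq.length_le
          rw [hplen] at this
          rcases this.lt_or_eq with h | h
          · exact h
          · exfalso
            apply hqne
            rw [List.prefix_iff_eq_take] at hq
            rw [hq, h, ← hplen, List.take_length]
        have hqw : q = w.take q.length := by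
          rw [List.prefix_iff_eq_take] at hq
          conv_lhs => rw [hq, hp, List.take_take]
          rw [min_eq_left hqlen.le]
        have := hNmin q.length hqlen
        rw [← hqw] at this
        exact this
    have hrlen : r.length = r.sum + n := by
      have h1 : p.length + r.length = w.length := by rw [← hpr]; simp
      have h2 : p.sum + r.sum = w.sum := by rw [← hpr]; simp
      omega
    have hrpref : ∀ q, q <+: r → q ≠ r → q.length < q.sum + n := by
      intro q hq hqne
      have h1 : p ++ q <+: w := by
        rw [← hpr]
        obtain ⟨t, ht⟩ := hq
        exact ⟨t, by rw [List.append_assoc, ht]⟩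
      have h2 : p ++ q ≠ w := by
        intro hc
        apply hqne
        rw [← hpr] at hc
        exact List.append_cancel_left hc
      have := hpref (p ++ q) h1 h2
      simp only [List.length_append, List.sum_append] at this
      rw [hplen] at this
      omega
    obtain ⟨ls, hls1, hls2, hls3⟩ := ih r hrlen hrpref
    refine ⟨p :: ls, by simp [hls1], ?_, by simp [hls3, hpr]⟩
    intro l hl
    rcases List.mem_cons.1 hl with rfl | hl
    · exact hpvalid
    · exact hls2 l hl


/-- `dfn w j = j - sum of first j entries` (as an integer). -/
def dfn (w : List ℕ) (j : ℕ) : ℤ := (j : ℤ) - ((w.take j).sum : ℤ)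

lemma dfn_zero (w : List ℕ) : dfn w 0 = 0 := by simp [dfn]

lemma dfn_length (w : List ℕ) (h : w.length = w.sum + 1) : dfn w w.length = 1 := by
  rw [dfn, List.take_length]; omega

lemma sum_take_rotate_le (w : List ℕ) {r j : ℕ} (hr : r ≤ w.length) (hj : j ≤ w.length - r) :
    (((w.rotate r).take j).sum : ℤ) = ((w.take (r+j)).sum : ℤ) - ((w.take r).sum : ℤ) := by
  rw [List.rotate_eq_drop_append_take hr,
    List.take_append_of_le_length (by rw [List.length_drop]; omega)]
  have hsum : (w.take (r+j)).sum = (w.take r).sum + ((w.drop r).take j).sum := by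
    rw [List.take_add, List.sum_append]
  omega

lemma sum_take_rotate_gt (w : List ℕ) {r j : ℕ} (hr : r ≤ w.length) (hj : j ≤ w.length)
    (hj2 : w.length - r < j) :
    (((w.rotate r).take j).sum : ℤ) =
      ((w.sum : ℤ) - ((w.take r).sum : ℤ)) + ((w.take (r + j - w.length)).sum : ℤ) := by
  rw [List.rotate_eq_drop_append_take hr, List.take_append,
    List.take_of_length_le (by rw [List.length_drop]; omega), List.length_drop,
    List.take_take, min_eq_left (by omega)]
  have harg : j - (w.length - r) = r + j - w.length := by omega
  have hds : (w.take r).sum + (w.drop r).sum = w.sum := by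
    rw [← List.sum_append, List.take_append_drop]
  rw [List.sum_append, harg]
  omega

lemma goodP_iff_dfn (w : List ℕ) : GoodP w ↔ ∀ j < w.length, dfn w j ≤ 0 := by
  constructor
  · intro h j hj
    have hne : w.take j ≠ w := by
      intro hc
      have := congrArg List.length hc
      rw [List.length_take, min_eq_left hj.le] at this
      omega
    have hp := h (w.take j) (List.take_prefix _ _) hne
    rw [List.length_take, min_eq_left hj.le] at hp
    rw [dfn]
    omega
  · intro h p hp hne
    have hl : p.length < w.length := by
      rcases hp.length_le.lt_or_eq with h' | h'
      · exact h'
      · exfalso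
        apply hne
        rw [List.prefix_iff_eq_take] at hp
        rw [hp, h', List.take_length]
    have hd := h p.length hl
    rw [List.prefix_iff_eq_take] at hp
    rw [dfn, ← hp] at hd
    omega

lemma valid_iff_dfn (w : List ℕ) :
    Valid w ↔ w.length = w.sum + 1 ∧ ∀ j < w.length, dfn w j ≤ 0 := by
  rw [Valid, goodP_iff_dfn]

lemma rotate_len_sum (w : List ℕ) (r : ℕ) :
    (w.rotate r).length = w.length ∧ (w.rotate r).sum = w.sum :=
  ⟨by simp, (List.rotate_perm w r).sum_eq⟩

/-- Cycle lemma, existence part. -/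
lemma exists_valid_rotate (w : List ℕ) (h : w.length = w.sum + 1) :
    ∃ r < w.length, Valid (w.rotate r) := by
  classical
  have hlen : 1 ≤ w.length := by omega
  have hne : (Finset.image (dfn w) (Finset.range (w.length + 1))).Nonempty :=
    ⟨dfn w 0, Finset.mem_image.2 ⟨0, by simp, rfl⟩⟩
  set M := (Finset.image (dfn w) (Finset.range (w.length + 1))).max' hne with hM
  have hub : ∀ j ≤ w.length, dfn w j ≤ M := fun j hj =>
    Finset.le_max' _ _ (Finset.mem_image.2 ⟨j, Finset.mem_range.2 (by omega), rfl⟩)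
  have hPex : ∃ k, k ≤ w.length ∧ dfn w k = M := by
    have : M ∈ Finset.image (dfn w) (Finset.range (w.length + 1)) := Finset.max'_mem _ _
    obtain ⟨k, hk, hdk⟩ := Finset.mem_image.1 this
    exact ⟨k, Nat.lt_succ_iff.1 (Finset.mem_range.1 hk), hdk⟩
  obtain ⟨N, hNle, hNM, hmin⟩ :
      ∃ N, N ≤ w.length ∧ dfn w N = M ∧ ∀ j < N, j ≤ w.length → dfn w j ≤ M - 1 := by
    refine ⟨Nat.find hPex, (Nat.find_spec hPex).1, (Nat.find_spec hPex).2, ?_⟩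
    intro j hj hjle
    have hne' := Nat.find_min hPex hj
    push_neg at hne'
    have h1 := hne' hjle
    have h2 := hub j hjle
    omega
  have hdlen : dfn w w.length = 1 := dfn_length w h
  have hM1 : 1 ≤ M := hdlen ▸ hub w.length le_rfl
  have hN1 : 1 ≤ N := by
    rcases Nat.eq_zero_or_pos N with h0 | h'
    · rw [h0, dfn_zero] at hNM; omega
    · exact h'
  rcases eq_or_lt_of_le hNle with hNeq | hNlt
  · -- N = length : w itself is valid
    refine ⟨0, by omega, ?_⟩
    rw [List.rotate_zero, valid_iff_dfn]
    refine ⟨h, fun j hj => ?_⟩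
    have h1 := hmin j (hNeq ▸ hj) hj.le
    have hMeq : M = 1 := by rw [← hNM, hNeq, hdlen]
    omega
  · refine ⟨N, hNlt, ?_⟩
    rw [valid_iff_dfn]
    obtain ⟨hl, hs⟩ := rotate_len_sum w N
    refine ⟨by omega, fun j hj => ?_⟩
    rw [hl] at hj
    rcases le_or_gt j (w.length - N) with hcase | hcase
    · have h1 := sum_take_rotate_le w hNlt.le hcase
      have h2 := hub (N + j) (by omega)
      rw [dfn] at h2 hNM ⊢
      omega
    · have h1 := sum_take_rotate_gt w hNlt.le hj.le hcase
      have hj' : N + j - w.length < N := by omega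
      have hlow := hmin _ hj' (by omega)
      rw [dfn] at hlow hNM ⊢
      omega

/-- Consequences of validity of a rotation, in terms of `dfn`. -/
lemma valid_rotate_dfn {w : List ℕ} (h : w.length = w.sum + 1) {r : ℕ} (hr : r < w.length)
    (hv : Valid (w.rotate r)) :
    (∀ i, r < i → i < w.length → dfn w i ≤ dfn w r) ∧
      (0 < r → 1 ≤ dfn w r) ∧ (∀ j, j < r → dfn w j ≤ dfn w r - 1) := by
  rw [valid_iff_dfn] at hv
  obtain ⟨hl, hs⟩ := rotate_len_sum w r
  obtain ⟨-, hd⟩ := hv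
  rw [hl] at hd
  have key1 : ∀ i, r < i → i ≤ w.length → i - r < w.length → dfn w i ≤ dfn w r := by
    intro i hi hile hjlt
    have hj : i - r ≤ w.length - r := by omega
    have h1 := sum_take_rotate_le w hr.le hj
    have hdj := hd (i - r) hjlt
    have harg : r + (i - r) = i := by omega
    rw [harg] at h1
    rw [dfn] at hdj ⊢
    rw [dfn]
    omega
  have key2 : 0 < r → 1 ≤ dfn w r := by
    intro hr0
    have h1 := key1 w.length (by omega) le_rfl (by omega)
    rw [dfn_length w h] at h1
    omega
  refine ⟨fun i hi hilt => key1 i hi hilt.le (by omega), key2, ?_⟩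
  intro j hj
  rcases Nat.eq_zero_or_pos j with rfl | hj0
  · rw [dfn_zero]
    have := key2 (by omega)
    omega
  · have hjlt : w.length - r + j < w.length := by omega
    have hgt : w.length - r < w.length - r + j := by omega
    have h1 := sum_take_rotate_gt w hr.le (by omega) hgt
    have hdj := hd (w.length - r + j) hjlt
    have harg : r + (w.length - r + j) - w.length = j := by omega
    rw [harg] at h1
    rw [dfn] at hdj ⊢
    rw [dfn]
    omega

/-- Cycle lemma, uniqueness part. -/
lemma unique_valid_rotate {w : List ℕ} (h : w.length = w.sum + 1) {r r' : ℕ}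
    (hr : r < w.length) (hr' : r' < w.length)
    (hv : Valid (w.rotate r)) (hv' : Valid (w.rotate r')) : r = r' := by
  rcases lt_trichotomy r r' with hlt | heq | hgt
  · exfalso
    have h1 := (valid_rotate_dfn h hr hv).1 r' hlt hr'
    have h2 := (valid_rotate_dfn h hr' hv').2.2 r hlt
    omega
  · exact heq
  · exfalso
    have h1 := (valid_rotate_dfn h hr' hv').1 r hgt hr
    have h2 := (valid_rotate_dfn h hr hv).2.2 r' hgt
    omega


/-- Lists with prescribed letter counts. -/
def CS (c : ℕ → ℕ) := {l : List ℕ // ∀ n, l.count n = c n}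

/-- Decrement `c` at `a`. -/
def dec (c : ℕ → ℕ) (a : ℕ) : ℕ → ℕ := fun n => if n = a then c n - 1 else c n

lemma sum_dec {s : Finset ℕ} {c : ℕ → ℕ} {a : ℕ} (has : a ∈ s) (hca : c a ≠ 0) :
    ∑ b ∈ s, dec c a b = (∑ b ∈ s, c b) - 1 := by
  classical
  rw [← Finset.add_sum_erase s (dec c a) has, ← Finset.add_sum_erase s c has]
  have h1 : ∑ b ∈ s.erase a, dec c a b = ∑ b ∈ s.erase a, c b := by
    refine Finset.sum_congr rfl fun b hb => ?_
    have : b ≠ a := (Finset.mem_erase.1 hb).1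
    simp [dec, this]
  rw [h1]
  have h2 : dec c a a = c a - 1 := by simp [dec]
  rw [h2]
  have := Nat.pos_of_ne_zero hca
  omega

lemma prod_fact_dec {s : Finset ℕ} {c : ℕ → ℕ} {a : ℕ} (has : a ∈ s) (hca : c a ≠ 0) :
    c a * ∏ b ∈ s, ((dec c a) b).factorial = ∏ b ∈ s, (c b).factorial := by
  classical
  rw [← Finset.mul_prod_erase s (fun b => ((dec c a) b).factorial) has,
    ← Finset.mul_prod_erase s (fun b => (c b).factorial) has]
  have h1 : ∏ b ∈ s.erase a, ((dec c a) b).factorial = ∏ b ∈ s.erase a, (c b).factorial := by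
    refine Finset.prod_congr rfl fun b hb => ?_
    have : b ≠ a := (Finset.mem_erase.1 hb).1
    simp [dec, this]
  rw [h1, ← mul_assoc]
  congr 1
  have h2 : dec c a a = c a - 1 := by simp [dec]
  rw [h2]
  exact Nat.mul_factorial_pred hca

lemma counts_aux (s : Finset ℕ) :
    ∀ T (c : ℕ → ℕ), (∀ n ∉ s, c n = 0) → (∑ a ∈ s, c a) = T →
    ∃ _ : Finite (CS c),
      Nat.card (CS c) * ∏ a ∈ s, (c a).factorial = T.factorial := by
  intro T
  induction T with
  | zero =>
    intro c hc hsum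
    have hc0 : ∀ n, c n = 0 := by
      intro n
      by_cases hn : n ∈ s
      · exact Finset.sum_eq_zero_iff.1 hsum n hn
      · exact hc n hn
    have huniq : Unique (CS c) := by
      refine ⟨⟨⟨[], by simp [hc0]⟩⟩, ?_⟩
      rintro ⟨l, hl⟩
      have hnil : l = [] := by
        rcases l with _ | ⟨a, tl⟩
        · rfl
        · exfalso
          have h1 : 0 < (a :: tl).count a := List.count_pos_iff.2 (by simp)
          rw [hl a, hc0 a] at h1
          omega
      exact Subtype.ext hnil
    refine ⟨Finite.of_subsingleton, ?_⟩
    rw [Nat.card_unique]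
    simp [hc0, Nat.factorial]
  | succ T ih =>
    intro c hc hsum
    classical
    set t := s.filter (fun a => c a ≠ 0) with ht
    have hmemt : ∀ a ∈ t, a ∈ s ∧ c a ≠ 0 := fun a ha => Finset.mem_filter.1 ha
    have hfib : ∀ a ∈ t, Finite (CS (dec c a)) ∧
        Nat.card (CS (dec c a)) * ∏ b ∈ s, ((dec c a) b).factorial = T.factorial := by
      intro a hat
      obtain ⟨has, hca⟩ := hmemt a hat
      obtain ⟨h1, h2⟩ := ih (dec c a)
        (fun n hn => by
          have hna : n ≠ a := fun hna => hn (hna ▸ has)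
          simp [dec, hna, hc n hn])
        (by have := sum_dec has hca; omega)
      exact ⟨h1, h2⟩
    -- the head-cons bijection
    have hcount : ∀ a ∈ t, ∀ (l : List ℕ), (∀ n, l.count n = dec c a n) →
        ∀ n, (a :: l).count n = c n := by
      intro a ha l hl n
      rw [List.count_cons, hl n]
      by_cases hna : n = a
      · subst hna
        have := (hmemt n ha).2
        simp [dec]
        omega
      · simp [dec, hna, Ne.symm hna]
    haveI : ∀ a : {x // x ∈ t}, Finite (CS (dec c a.1)) := fun a => (hfib a.1 a.2).1
    set F : (Σ a : {x // x ∈ t}, CS (dec c a.1)) → CS c :=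
      fun x => ⟨x.1.1 :: x.2.1, hcount x.1.1 x.1.2 x.2.1 x.2.2⟩ with hF
    have hFinj : Function.Injective F := by
      rintro ⟨⟨a, ha⟩, ⟨l, hl⟩⟩ ⟨⟨a', ha'⟩, ⟨l', hl'⟩⟩ hxy
      have h := Subtype.ext_iff.1 hxy
      simp only [hF, List.cons.injEq] at h
      obtain ⟨rfl, rfl⟩ := h
      rfl
    have hFsurj : Function.Surjective F := by
      rintro ⟨l, hl⟩
      rcases l with _ | ⟨a, l⟩
      · exfalso
        have h0 : ∑ a ∈ s, c a ≠ 0 := by omega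
        have : ∃ a ∈ s, c a ≠ 0 := by
          by_contra hcon
          push_neg at hcon
          exact h0 (Finset.sum_eq_zero hcon)
        obtain ⟨a, has, hca⟩ := this
        exact hca ((hl a).symm.trans (by simp))
      · have hca : c a ≠ 0 := by
          have h1 : 0 < (a :: l).count a := List.count_pos_iff.2 (by simp)
          rw [hl a] at h1
          omega
        have hasm : a ∈ s := by
          by_contra hcon
          exact hca (hc a hcon)
        have hat : a ∈ t := Finset.mem_filter.2 ⟨hasm, hca⟩
        refine ⟨⟨⟨a, hat⟩, ⟨l, ?_⟩⟩, Subtype.ext rfl⟩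
        intro n
        have := hl n
        rw [List.count_cons] at this
        by_cases hna : n = a
        · subst hna
          simp at this
          simp [dec]
          omega
        · simp [hna, Ne.symm hna] at this
          simp [dec, hna, Ne.symm hna]
          exact this
    haveI hfinc : Finite (CS c) := Finite.of_surjective F hFsurj
    refine ⟨hfinc, ?_⟩
    have hcard : Nat.card (CS c) = ∑ a ∈ t, Nat.card (CS (dec c a)) := by
      rw [← Nat.card_eq_of_bijective F ⟨hFinj, hFsurj⟩]
      letI : ∀ a : {x // x ∈ t}, Fintype (CS (dec c a.1)) := fun a => Fintype.ofFinite _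
      rw [Nat.card_eq_fintype_card, Fintype.card_sigma]
      rw [← Finset.sum_coe_sort t (fun a => Nat.card (CS (dec c a)))]
      exact Finset.sum_congr rfl fun a _ => (Nat.card_eq_fintype_card).symm
    rw [hcard, Finset.sum_mul]
    have hterm : ∀ a ∈ t, Nat.card (CS (dec c a)) * ∏ b ∈ s, (c b).factorial
        = c a * T.factorial := by
      intro a hat
      obtain ⟨has, hca⟩ := hmemt a hat
      rw [← prod_fact_dec has hca, mul_left_comm, (hfib a hat).2]
    rw [Finset.sum_congr rfl hterm, ← Finset.sum_mul]
    have hsumt : ∑ a ∈ t, c a = T + 1 := by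
      rw [ht, Finset.sum_filter_ne_zero, hsum]
    rw [hsumt, Nat.factorial_succ]


lemma length_eq_sum_counts {s : Finset ℕ} :
    ∀ {l : List ℕ}, (∀ a ∈ l, a ∈ s) → l.length = ∑ a ∈ s, l.count a := by
  intro l
  induction l with
  | nil => simp
  | cons x t ih =>
    intro h
    have hx : x ∈ s := h x (by simp)
    have ht := ih fun a ha => h a (by simp [ha])
    simp only [List.length_cons, List.count_cons, beq_iff_eq]
    rw [Finset.sum_add_distrib, Finset.sum_ite_eq s x (fun _ => 1), if_pos hx]
    omega

lemma sum_eq_sum_counts {s : Finset ℕ} :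
    ∀ {l : List ℕ}, (∀ a ∈ l, a ∈ s) → l.sum = ∑ a ∈ s, a * l.count a := by
  intro l
  induction l with
  | nil => simp
  | cons x t ih =>
    intro h
    have hx : x ∈ s := h x (by simp)
    have ht := ih fun a ha => h a (by simp [ha])
    simp only [List.sum_cons, List.count_cons, beq_iff_eq, Nat.mul_add]
    rw [Finset.sum_add_distrib]
    have : (∑ a ∈ s, a * (if x = a then 1 else 0)) = x := by
      have h1 : ∀ a, (a * (if x = a then 1 else 0)) = if x = a then a else 0 := by
        intro a
        by_cases hax : x = a <;> simp [hax]
      simp only [h1]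
      rw [Finset.sum_ite_eq s x (fun a => a), if_pos hx]
    rw [this]
    omega

theorem treeInd {P : OrderedTree → Prop}
    (h : ∀ ts, (∀ t ∈ ts, P t) → P (OrderedTree.node ts)) : ∀ t, P t := by
  have key : ∀ n (t : OrderedTree), sizeOf t ≤ n → P t := by
    intro n
    induction n with
    | zero =>
      intro t ht
      cases t with
      | node ts =>
        simp only [OrderedTree.node.sizeOf_spec] at ht
        have : 0 < sizeOf ts := by cases ts <;> simp
        omega
    | succ n ihn =>
      intro t ht
      cases t with
      | node ts =>
        refine h ts fun c hc => ihn c ?_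
        have h1 := List.sizeOf_lt_of_mem hc
        simp only [OrderedTree.node.sizeOf_spec] at ht
        omega
  exact fun t => key (sizeOf t) t le_rfl

/-- The preorder degree code (Łukasiewicz word) of a tree. -/
def code : OrderedTree → List ℕ
  | OrderedTree.node ts => ts.length :: (ts.attach.map fun t => code t.1).flatten
  decreasing_by simp [OrderedTree.node.sizeOf_spec]; exact Nat.lt_add_left 1 (List.sizeOf_lt_of_mem t.2)

lemma code_node (ts : List OrderedTree) :
    code (OrderedTree.node ts) = ts.length :: (ts.map code).flatten := by
  rw [code]
  congr 1
  rw [List.attach_map_val]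

lemma countDeg_node (n : ℕ) (ts : List OrderedTree) :
    OrderedTree.countDeg n (OrderedTree.node ts) =
      (if ts.length = n then 1 else 0) + (ts.map (OrderedTree.countDeg n)).sum := by
  rw [OrderedTree.countDeg]
  congr 2
  rw [List.attach_map_val]

lemma valid_map_code (ts : List OrderedTree) (ih : ∀ t ∈ ts, Valid (code t)) :
    ∀ l ∈ ts.map code, Valid l := by
  intro l hl
  obtain ⟨t', ht', rfl⟩ := List.mem_map.1 hl
  exact ih t' ht'

lemma valid_code : ∀ t, Valid (code t) := by
  refine treeInd ?_
  intro ts ih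
  rw [code_node]
  have hls := valid_map_code ts ih
  have hfl := flatten_len_sum hls
  have hlenm : (ts.map code).length = ts.length := by simp
  constructor
  · simp only [List.length_cons, List.sum_cons]
    omega
  · intro p hp hne
    rcases p with _ | ⟨x, q⟩
    · simp
    · rw [List.cons_prefix_cons] at hp
      obtain ⟨rfl, hq⟩ := hp
      have hqne : q ≠ (ts.map code).flatten := fun hc => hne (by rw [hc])
      have := prefix_flatten_lt hls q hq hqne
      simp only [List.length_cons, List.sum_cons]
      omega

lemma count_code (n : ℕ) : ∀ t, (code t).count n = OrderedTree.countDeg n t := by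
  refine treeInd ?_
  intro ts ih
  rw [code_node, countDeg_node, List.count_cons, List.count_flatten, List.map_map]
  have hmap : ts.map (List.count n ∘ code) = ts.map (OrderedTree.countDeg n) :=
    List.map_congr_left fun t ht => by simp [Function.comp, ih t ht]
  rw [hmap]
  by_cases h : ts.length = n
  · simp [h]
    omega
  · simp [h, Ne.symm h]

lemma append_valid_eq {a a' b b' : List ℕ} (ha : Valid a) (ha' : Valid a')
    (h : a ++ b = a' ++ b') : a = a' ∧ b = b' := by
  have h1 : a <+: a' ++ b' := h ▸ List.prefix_append a b
  rcases prefix_append_cases h1 with hp | ⟨q, hq, hqb⟩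
  · rcases eq_or_ne a a' with rfl | hne
    · exact ⟨rfl, List.append_cancel_left h⟩
    · exfalso
      have h2 := ha'.2 a hp hne
      have h3 := ha.1
      omega
  · rcases eq_or_ne q [] with rfl | hne
    · rw [List.append_nil] at hq
      subst hq
      exact ⟨rfl, List.append_cancel_left h⟩
    · exfalso
      have hne' : a' ≠ a := by
        intro hc
        rw [← hc] at hq
        exact hne (List.self_eq_append_right.1 hq)
      have h2 := ha.2 a' ⟨q, hq.symm⟩ hne'
      have h3 := ha'.1
      omega

lemma blocks_unique : ∀ ls ls' : List (List ℕ), (∀ l ∈ ls, Valid l) → (∀ l ∈ ls', Valid l) →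
    ls.flatten = ls'.flatten → ls.length = ls'.length → ls = ls' := by
  intro ls
  induction ls with
  | nil =>
    intro ls' _ _ _ hlen
    exact (List.length_eq_zero_iff.1 (by simpa using hlen.symm)).symm
  | cons a rest ih =>
    intro ls' hv hv' hflat hlen
    rcases ls' with _ | ⟨a', rest'⟩
    · simp at hlen
    · simp only [List.flatten_cons] at hflat
      obtain ⟨rfl, hb⟩ := append_valid_eq (hv a (by simp)) (hv' a' (by simp)) hflat
      rw [ih rest' (fun l hl => hv l (by simp [hl])) (fun l hl => hv' l (by simp [hl])) hb
        (by simpa using hlen)]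

lemma map_code_inj : ∀ ts us : List OrderedTree,
    (∀ t ∈ ts, ∀ u, code t = code u → t = u) →
    ts.map code = us.map code → ts = us := by
  intro ts
  induction ts with
  | nil =>
    intro us _ h
    rcases us with _ | _
    · rfl
    · simp at h
  | cons t rest ih =>
    intro us hih h
    rcases us with _ | ⟨u, urest⟩
    · simp at h
    · simp only [List.map_cons, List.cons.injEq] at h
      rw [hih t (by simp) u h.1, ih urest (fun x hx => hih x (by simp [hx])) h.2]

lemma code_inj : ∀ t u, code t = code u → t = u := by
  refine treeInd ?_
  intro ts ih u h
  cases u with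
  | node us =>
    rw [code_node, code_node] at h
    simp only [List.cons.injEq] at h
    have hmap : ts.map code = us.map code :=
      blocks_unique _ _ (valid_map_code ts fun t ht => valid_code t)
        (valid_map_code us fun t ht => valid_code t) h.2 (by simp [h.1])
    rw [map_code_inj ts us (fun t ht => ih t ht) hmap]

lemma exists_map_code : ∀ ls : List (List ℕ), (∀ l ∈ ls, ∃ t, code t = l) →
    ∃ ts : List OrderedTree, ts.map code = ls := by
  intro ls
  induction ls with
  | nil => exact fun _ => ⟨[], rfl⟩
  | cons a rest ih =>
    intro h
    obtain ⟨t, ht⟩ := h a (by simp)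
    obtain ⟨ts, hts⟩ := ih fun l hl => h l (by simp [hl])
    exact ⟨t :: ts, by simp [ht, hts]⟩

lemma code_surj_aux : ∀ N (w : List ℕ), w.length ≤ N → Valid w → ∃ t, code t = w := by
  intro N
  induction N with
  | zero =>
    intro w hl hv
    have := hv.1
    omega
  | succ N ih =>
    intro w hlN hv
    rcases w with _ | ⟨n, rest⟩
    · have := hv.1
      simp at this
    · have hlen : rest.length = rest.sum + n := by
        have h1 := hv.1
        simp only [List.length_cons, List.sum_cons] at h1
        omega
      have hpref : ∀ p, p <+: rest → p ≠ rest → p.length < p.sum + n := by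
        intro p hp hne
        have h1 : n :: p <+: n :: rest := List.cons_prefix_cons.2 ⟨rfl, hp⟩
        have h2 : n :: p ≠ n :: rest := fun hc => hne (by injection hc)
        have := hv.2 (n :: p) h1 h2
        simp only [List.length_cons, List.sum_cons] at this
        omega
      obtain ⟨ls, hls1, hls2, hls3⟩ := split_blocks n rest hlen hpref
      have hmem : ∀ l ∈ ls, ∃ t, code t = l := by
        intro l hl
        refine ih l ?_ (hls2 l hl)
        have h1 : l.length ≤ ls.flatten.length := by
          rw [List.length_flatten]
          exact List.le_sum_of_mem (List.mem_map_of_mem hl)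
        rw [hls3] at h1
        have h2 : (n :: rest).length ≤ N + 1 := hlN
        simp only [List.length_cons] at h2
        omega
      obtain ⟨ts, hts⟩ := exists_map_code ls hmem
      refine ⟨OrderedTree.node ts, ?_⟩
      rw [code_node, hts, hls3]
      congr 1
      rw [← hls1, ← hts]
      simp


section Glue
variable (m : ℕ+ →₀ ℕ)

def pnatEmb : ℕ+ ↪ ℕ := ⟨fun p => (p : ℕ), fun _ _ h => PNat.coe_injective h⟩
def suppN : Finset ℕ := m.support.map pnatEmb
def Em : ℕ := m.sum fun n k => (n : ℕ) * k
def Dm : ℕ := m.sum fun n k => ((n : ℕ) - 1) * k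
def cfun : ℕ → ℕ := fun n => if h : 0 < n then m ⟨n, h⟩ else 1 + Dm m
def sFin : Finset ℕ := insert 0 (suppN m)

lemma mem_suppN {a : ℕ} : a ∈ suppN m ↔ ∃ h : 0 < a, m ⟨a, h⟩ ≠ 0 := by
  simp only [suppN, Finset.mem_map, Finsupp.mem_support_iff]
  constructor
  · rintro ⟨p, hp, rfl⟩
    exact ⟨p.2, hp⟩
  · rintro ⟨h, hm⟩
    exact ⟨⟨a, h⟩, hm, rfl⟩

lemma zero_not_mem_suppN : 0 ∉ suppN m := by
  rw [mem_suppN]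
  rintro ⟨h, -⟩
  omega

lemma cfun_zero : cfun m 0 = 1 + Dm m := by simp [cfun]

lemma cfun_coe (p : ℕ+) : cfun m (p : ℕ) = m p := dif_pos p.2

lemma pnatEmb_apply (p : ℕ+) : pnatEmb p = (p : ℕ) := rfl

lemma cfun_eq_zero {n : ℕ} (hn : n ∉ sFin m) : cfun m n = 0 := by
  simp only [sFin, Finset.mem_insert, not_or] at hn
  obtain ⟨h0, hs⟩ := hn
  have hpos : 0 < n := Nat.pos_of_ne_zero h0
  rw [mem_suppN] at hs
  push_neg at hs
  simp only [cfun, dif_pos hpos]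
  exact hs hpos

lemma sum_suppN_c : ∑ a ∈ suppN m, cfun m a = m.sum fun _ k => k := by
  rw [suppN, Finset.sum_map, Finsupp.sum]
  exact Finset.sum_congr rfl fun p _ => by rw [pnatEmb_apply, cfun_coe m p]

lemma sum_suppN_ac : ∑ a ∈ suppN m, a * cfun m a = Em m := by
  rw [suppN, Finset.sum_map, Em, Finsupp.sum]
  exact Finset.sum_congr rfl fun p _ => by rw [pnatEmb_apply, cfun_coe m p]

lemma hED : Em m = Dm m + m.sum fun _ k => k := by
  rw [Em, Dm, Finsupp.sum, Finsupp.sum, Finsupp.sum, ← Finset.sum_add_distrib]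
  refine Finset.sum_congr rfl fun p _ => ?_
  have h1 : ((p : ℕ) - 1) * m p = (p : ℕ) * m p - m p := Nat.sub_one_mul _ _
  have h2 : m p ≤ (p : ℕ) * m p := Nat.le_mul_of_pos_left _ p.2
  omega

lemma sum_s_c : ∑ a ∈ sFin m, cfun m a = Em m + 1 := by
  rw [sFin, Finset.sum_insert (zero_not_mem_suppN m), cfun_zero, sum_suppN_c]
  have := hED m
  omega

lemma sum_s_ac : ∑ a ∈ sFin m, a * cfun m a = Em m := by
  rw [sFin, Finset.sum_insert (zero_not_mem_suppN m)]
  simpa using sum_suppN_ac m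

lemma prod_s_fact :
    ∏ a ∈ sFin m, (cfun m a).factorial =
      (1 + Dm m).factorial * m.prod fun _ k => k.factorial := by
  rw [sFin, Finset.prod_insert (zero_not_mem_suppN m), cfun_zero, suppN, Finset.prod_map,
    Finsupp.prod]
  congr 1
  exact Finset.prod_congr rfl fun p _ => by rw [pnatEmb_apply, cfun_coe m p]

lemma word_mem_sFin {l : List ℕ} (hl : ∀ a, l.count a = cfun m a) :
    ∀ a ∈ l, a ∈ sFin m := by
  intro a ha
  by_contra hcon
  have h1 : 0 < l.count a := List.count_pos_iff.2 ha
  rw [hl a, cfun_eq_zero m hcon] at h1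
  omega

lemma word_length {l : List ℕ} (hl : ∀ a, l.count a = cfun m a) :
    l.length = Em m + 1 := by
  rw [length_eq_sum_counts (word_mem_sFin m hl), ← sum_s_c m]
  exact Finset.sum_congr rfl fun a _ => hl a

lemma word_sum {l : List ℕ} (hl : ∀ a, l.count a = cfun m a) : l.sum = Em m := by
  rw [sum_eq_sum_counts (word_mem_sFin m hl)]
  rw [← sum_s_ac m]
  exact Finset.sum_congr rfl fun a _ => by rw [hl a]

lemma hasType_iff {τ : OrderedTree} :
    hasType τ m ↔ ∀ a, (code τ).count a = cfun m a := by
  constructor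
  · intro h a
    rcases Nat.eq_zero_or_pos a with rfl | ha
    · -- count of leaves
      have hmem : ∀ b ∈ code τ, b ∈ sFin m := by
        intro b hb
        rcases Nat.eq_zero_or_pos b with rfl | hb'
        · simp [sFin]
        · have h1 : 0 < (code τ).count b := List.count_pos_iff.2 hb
          have hcd : OrderedTree.countDeg b τ = m ⟨b, hb'⟩ := h ⟨b, hb'⟩
          rw [count_code, hcd] at h1
          exact Finset.mem_insert_of_mem ((mem_suppN m).2 ⟨hb', by omega⟩)
      have hlen := length_eq_sum_counts hmem
      have hsum := sum_eq_sum_counts hmem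
      have hval := (valid_code τ).1
      rw [sFin, Finset.sum_insert (zero_not_mem_suppN m)] at hlen hsum
      have hc1 : ∑ a ∈ suppN m, (code τ).count a = m.sum fun _ k => k := by
        rw [← sum_suppN_c m]
        refine Finset.sum_congr rfl fun a ha => ?_
        obtain ⟨hpos, -⟩ := (mem_suppN m).1 ha
        have hcd : OrderedTree.countDeg a τ = m ⟨a, hpos⟩ := h ⟨a, hpos⟩
        rw [count_code, hcd, cfun, dif_pos hpos]
      have hc2 : ∑ a ∈ suppN m, a * (code τ).count a = Em m := by
        rw [← sum_suppN_ac m]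
        refine Finset.sum_congr rfl fun a ha => ?_
        obtain ⟨hpos, -⟩ := (mem_suppN m).1 ha
        have hcd : OrderedTree.countDeg a τ = m ⟨a, hpos⟩ := h ⟨a, hpos⟩
        rw [count_code, hcd, cfun, dif_pos hpos]
      rw [hc1] at hlen
      rw [hc2] at hsum
      simp only [Nat.zero_mul, Nat.zero_add] at hsum
      rw [cfun_zero]
      have hed := hED m
      omega
    · rw [count_code, cfun]
      rw [dif_pos ha]
      exact h ⟨a, ha⟩
  · intro h n
    have := h (n : ℕ)
    rw [count_code, cfun_coe] at this
    exact this

/-- The set of valid words with counts `cfun m`. -/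
def VW := {l : List ℕ // (∀ a, l.count a = cfun m a) ∧ Valid l}

lemma tree_card_eq_VW : Nat.card {τ : OrderedTree // hasType τ m} = Nat.card (VW m) := by
  refine Nat.card_eq_of_bijective
    (fun x => (⟨code x.1, (hasType_iff m).1 x.2, valid_code x.1⟩ : VW m)) ⟨?_, ?_⟩
  · rintro ⟨τ, hτ⟩ ⟨τ', hτ'⟩ h
    have := Subtype.ext_iff.1 h
    exact Subtype.ext (code_inj τ τ' this)
  · rintro ⟨w, hw, hv⟩
    obtain ⟨τ, hτ⟩ := code_surj_aux w.length w le_rfl hv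
    exact ⟨⟨τ, (hasType_iff m).2 (by rw [hτ]; exact hw)⟩, Subtype.ext hτ⟩

lemma VW_prod_card : Nat.card (CS (cfun m)) = Nat.card (VW m) * (Em m + 1) := by
  have hV : 0 < Em m + 1 := Nat.succ_pos _
  have key : ∀ w : CS (cfun m), w.1.length = Em m + 1 ∧ w.1.sum = Em m := fun w =>
    ⟨word_length m w.2, word_sum m w.2⟩
  refine (Nat.card_eq_of_bijective
    (fun x : VW m × Fin (Em m + 1) =>
      (⟨x.1.1.rotate x.2.1, fun n => by
        rw [(List.rotate_perm x.1.1 x.2.1).count_eq n]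
        exact x.1.2.1 n⟩ : CS (cfun m))) ⟨?_, ?_⟩).symm.trans
    (by rw [Nat.card_prod]; simp)
  · rintro ⟨⟨v, hvc, hvv⟩, ⟨k, hk⟩⟩ ⟨⟨v', hvc', hvv'⟩, ⟨k', hk'⟩⟩ h
    have heq : v.rotate k = v'.rotate k' := Subtype.ext_iff.1 h
    have hvlen : v.length = Em m + 1 := word_length m hvc
    have hvlen' : v'.length = Em m + 1 := word_length m hvc'
    have hvsum : v.length = v.sum + 1 := hvv.1
    -- v' = v.rotate ((k + (len - k')) % len)
    have h1 : v' = v.rotate ((k + (v.length - k')) % v.length) := by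
      have h2 : (v.rotate k).rotate (v.length - k') = v.rotate (k + (v.length - k')) :=
        List.rotate_rotate v k (v.length - k')
      rw [heq] at h2
      have h3 : (v'.rotate k').rotate (v.length - k') = v'.rotate (k' + (v.length - k')) :=
        List.rotate_rotate v' k' (v.length - k')
      have h4 : k' + (v.length - k') = v'.length := by omega
      rw [h4, List.rotate_length] at h3
      rw [← h3, h2, ← List.rotate_mod]
    have h5 : ((k + (v.length - k')) % v.length) < v.length := Nat.mod_lt _ (by omega)
    have h6 : Valid (v.rotate ((k + (v.length - k')) % v.length)) := h1 ▸ hvv'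
    have h7 : Valid (v.rotate 0) := by rw [List.rotate_zero]; exact hvv
    have h8 := unique_valid_rotate hvsum h5 (by omega) h6 h7
    -- so (k + (len - k')) ≡ 0, hence k = k'
    have h9 : (k + (v.length - k')) % v.length = 0 := h8
    have h10 : k = k' := by
      rcases Nat.lt_or_ge k k' with hlt | hge
      · have : k + (v.length - k') < v.length := by omega
        have h11 : (k + (v.length - k')) % v.length = k + (v.length - k') := Nat.mod_eq_of_lt this
        omega
      · have h12 : k + (v.length - k') = (k - k') + v.length := by omega
        have h13 : (k + (v.length - k')) % v.length = (k - k') % v.length := by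
          rw [h12, Nat.add_mod_right]
        have h14 : (k - k') % v.length = k - k' := Nat.mod_eq_of_lt (by omega)
        omega
    subst h10
    have hveq : v = v' := by
      rw [h1, h9, List.rotate_zero]
    subst hveq
    rfl
  · rintro ⟨w, hw⟩
    have hwlen : w.length = Em m + 1 := word_length m hw
    have hwsum : w.sum = Em m := word_sum m hw
    obtain ⟨r, hr, hvr⟩ := exists_valid_rotate w (by omega)
    refine ⟨⟨⟨w.rotate r, fun n => by
        rw [(List.rotate_perm w r).count_eq n]; exact hw n, hvr⟩,
      ⟨(w.length - r) % w.length, by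
        rw [hwlen] at hr ⊢
        exact Nat.mod_lt _ (by omega)⟩⟩, ?_⟩
    refine Subtype.ext ?_
    show (w.rotate r).rotate ((w.length - r) % w.length) = w
    rw [List.rotate_rotate, ← List.rotate_mod]
    rcases Nat.eq_zero_or_pos r with rfl | hr0
    · simp
    · have h1 : r + (w.length - r) % w.length = r + (w.length - r) := by
        congr 1
        exact Nat.mod_eq_of_lt (by omega)
      rw [h1]
      have h2 : r + (w.length - r) = w.length := by omega
      rw [h2, Nat.mod_self, List.rotate_zero]

end Glue

end HC

/-- the number of ordered trees of type `m` equals the hyper-Catalan number. -/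
theorem treeCount_eq_hyperCatalan (m : ℕ+ →₀ ℕ) : treeCount m = hyperCatalan m := by

  classical
  obtain ⟨hfin, hcard⟩ := HC.counts_aux (HC.sFin m) (HC.Em m + 1) (HC.cfun m)
    (fun n hn => HC.cfun_eq_zero m hn) (HC.sum_s_c m)
  have h1 := HC.tree_card_eq_VW m
  have h2 := HC.VW_prod_card m
  rw [h2] at hcard
  -- hcard : (Nat.card VW * (Em+1)) * ∏ = (Em+1)!
  rw [HC.prod_s_fact m] at hcard
  have hfact : (HC.Em m + 1).factorial = (HC.Em m + 1) * (HC.Em m).factorial :=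
    Nat.factorial_succ _
  rw [hfact] at hcard
  have hP : 0 < (1 + HC.Dm m).factorial * m.prod fun _ k => k.factorial := by
    refine Nat.mul_pos (Nat.factorial_pos _) ?_
    exact Finset.prod_pos fun p _ => Nat.factorial_pos _
  have hcancel : Nat.card (HC.VW m) * ((1 + HC.Dm m).factorial * m.prod fun _ k => k.factorial)
      = (HC.Em m).factorial := by
    have h3 : (HC.Em m + 1) * (Nat.card (HC.VW m) *
        ((1 + HC.Dm m).factorial * m.prod fun _ k => k.factorial))
        = (HC.Em m + 1) * (HC.Em m).factorial := by
      rw [← hcard]; ring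
    exact Nat.eq_of_mul_eq_mul_left (Nat.succ_pos _) h3
  have hdiv : (HC.Em m).factorial /
      ((1 + HC.Dm m).factorial * m.prod fun _ k => k.factorial) = Nat.card (HC.VW m) :=
    Nat.div_eq_of_eq_mul_left hP hcancel.symm
  rw [treeCount, hyperCatalan]
  show Nat.card {τ : OrderedTree // hasType τ m} = _
  rw [h1]
  rw [← hdiv]
  rfl
end

section
/- Let T_m denote the number of ordered trees of type m. For every finitely supported m : ℕ+ →₀ ℕ with m ≠ 0, T_m = Σ_{n ≥ 1} Σ_{(m_1, …, m_n)} ∏_{i=1}^{n} T_{m_i}, where for each n the inner sum ranges over all n-tuples (m_1, …, m_n) of finitely supported functions ℕ+ →₀ ℕ with e_n + m_1 + ⋯ + m_n = m. Moreover T_0 = 1, where 0 is the zero function. -/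
/-!
Removing the root of a tree of type `m ≠ 0` with `n` children leaves an `n`-tuple of trees whose
types `mᵢ` satisfy `eₙ + ∑ mᵢ = m`, and this is a bijection. Grouping the tuples of trees by their
tuple of types turns the count into the sum of products. Since `Nat.card` vanishes on infinite
types, this needs every set of trees of a given type to be finite; that follows from the same
decomposition by well-founded induction on `m`, as each `mᵢ < m`.
-/

def Equiv.subtypeSigmaEquivSigmaSubtype {α : Type*} {β : α → Type*} (q : Sigma β → Prop) :
    {x : Sigma β // q x} ≃ Σ a, {b : β a // q ⟨a, b⟩} where
  toFun x := ⟨x.1.1, x.1.2, x.2⟩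
  invFun x := ⟨⟨x.1, x.2.1⟩, x.2.2⟩

theorem Nat.card_sigma_eq_finsum {α : Type*} {β : α → Type*} [Finite (Σ a, β a)] :
    Nat.card (Σ a, β a) = ∑ᶠ a, Nat.card (β a) := by
  have : ∀ a, Finite (β a) := fun a => Finite.of_injective (Sigma.mk a) sigma_mk_injective
  let t := (Set.finite_range (Sigma.fst : (Σ a, β a) → α)).toFinset
  have hmem : ∀ a, β a → a ∈ t := fun a b =>
    (Set.Finite.mem_toFinset _).2 ⟨⟨a, b⟩, rfl⟩
  have hsupp : Function.support (fun a => Nat.card (β a)) ⊆ t := fun a ha =>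
    hmem a (Nat.card_ne_zero.mp ha).1.some
  rw [finsum_eq_sum_of_support_subset _ hsupp, ← Finset.sum_coe_sort, ← Nat.card_sigma]
  exact Nat.card_congr (Equiv.sigmaSubtypeEquivOfSubset β (· ∈ t) hmem).symm

def Equiv.piSubtypeFiberEquiv {ι X Y : Type*} (g : X → Y) (P : (ι → Y) → Prop) :
    {v : ι → X // P fun i => g (v i)} ≃ Σ f : {f : ι → Y // P f}, ∀ i, {x // g x = f.1 i} :=
  (Equiv.sigmaSubtypeFiberEquivSubtype (g ∘ ·) fun _ => Iff.rfl).symm.trans <|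
    Equiv.sigmaCongrRight fun f =>
      (Equiv.subtypeEquivRight fun _ => funext_iff).trans
        (Equiv.subtypePiEquivPi (p := fun i x => g x = f.1 i))

theorem Nat.card_subtype_pi_eq_finsum_prod {ι X Y : Type*} [Fintype ι] (g : X → Y)
    (P : (ι → Y) → Prop) [Finite {v : ι → X // P fun i => g (v i)}] :
    Nat.card {v : ι → X // P fun i => g (v i)} =
      ∑ᶠ (f) (_ : P f), ∏ i, Nat.card {x // g x = f i} := by
  have := Finite.of_equiv _ (Equiv.piSubtypeFiberEquiv g P)
  rw [Nat.card_congr (Equiv.piSubtypeFiberEquiv g P), Nat.card_sigma_eq_finsum,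
    ← finsum_subtype_eq_finsum_cond]
  simp_rw [Nat.card_pi]

theorem Finsupp.lt_of_single_add_sum_eq {α ι : Type*} [Fintype ι] {a : α} {f : ι → (α →₀ ℕ)}
    {m : α →₀ ℕ} (h : Finsupp.single a 1 + ∑ j, f j = m) (i : ι) : f i < m := by
  subst h
  calc f i ≤ ∑ j, f j := Finset.single_le_sum (fun _ _ => zero_le) (Finset.mem_univ i)
    _ < Finsupp.single a 1 + ∑ j, f j := lt_add_of_pos_left _ (by simp [pos_iff_ne_zero])

namespace OrderedTree

theorem node_induction {P : OrderedTree → Prop}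
    (node : ∀ ts : List OrderedTree, (∀ t ∈ ts, P t) → P (node ts)) : ∀ t, P t
  | .node ts => node ts fun t _ => node_induction node t

noncomputable def rootType (k : ℕ) : ℕ+ →₀ ℕ :=
  if k = 0 then 0 else Finsupp.single k.toPNat' 1

theorem rootType_apply (k : ℕ) (n : ℕ+) : rootType k n = if k = n then 1 else 0 := by
  rcases Nat.eq_zero_or_pos k with rfl | hk
  · simp [rootType, n.ne_zero.symm]
  · simp [rootType, hk.ne', Finsupp.single_apply, ← PNat.coe_inj, PNat.toPNat'_coe hk]

theorem rootType_coe (n : ℕ+) : rootType n = Finsupp.single n 1 := by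
  simp [rootType]

noncomputable def treeType : OrderedTree → (ℕ+ →₀ ℕ)
  | node ts => rootType ts.length + (ts.map treeType).sum

theorem countDeg_eq_treeType_apply (n : ℕ+) (τ : OrderedTree) :
    countDeg n τ = treeType τ n := by
  induction τ using node_induction with
  | node ts ih =>
    rw [countDeg, treeType, Finsupp.add_apply, rootType_apply, List.attach_map_val,
      ← Finsupp.applyAddHom_apply, map_list_sum, List.map_map]
    exact congrArg _ (congrArg _ (List.map_congr_left ih))

theorem hasType_iff_treeType_eq (τ : OrderedTree) (m : ℕ+ →₀ ℕ) :
    hasType τ m ↔ treeType τ = m := by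
  simp only [hasType, countDeg_eq_treeType_apply, Finsupp.ext_iff]

theorem treeCount_eq_card (m : ℕ+ →₀ ℕ) :
    treeCount m = Nat.card {τ // treeType τ = m} :=
  Nat.card_congr (Equiv.subtypeEquivRight fun τ => hasType_iff_treeType_eq τ m)

theorem treeType_eq_zero_iff (τ : OrderedTree) : treeType τ = 0 ↔ τ = node [] := by
  obtain ⟨ts⟩ := τ
  cases ts with
  | nil => simp [treeType, rootType]
  | cons t ts => simp [treeType, rootType]

theorem treeCount_zero : treeCount 0 = 1 := by
  rw [treeCount_eq_card]
  simp_rw [treeType_eq_zero_iff]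
  exact Nat.card_unique

theorem treeType_node_ofFn (n : ℕ+) (v : Fin n → OrderedTree) :
    treeType (node (List.ofFn v)) = Finsupp.single n 1 + ∑ i, treeType (v i) := by
  rw [treeType, List.length_ofFn, rootType_coe, List.map_ofFn, List.sum_ofFn]
  rfl

def equivSigmaTuple : OrderedTree ≃ Σ n, Fin n → OrderedTree :=
  (Equiv.mk children node (fun ⟨_⟩ => rfl) fun _ => rfl).trans List.equivSigmaTuple

noncomputable def fiberTreeTypeEquiv (m : ℕ+ →₀ ℕ) (hm : m ≠ 0) :
    {τ // treeType τ = m} ≃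
      Σ n : ℕ+, {v : Fin n → OrderedTree // Finsupp.single n 1 + ∑ i, treeType (v i) = m} :=
  have hpos (n : ℕ) (v : {v : Fin n → OrderedTree // treeType (node (List.ofFn v)) = m}) :
      0 < n := by
    refine Nat.pos_of_ne_zero fun hn => hm ?_
    subst hn
    rw [← v.2, List.ofFn_zero, treeType_eq_zero_iff]
  calc {τ // treeType τ = m}
      ≃ {x : Σ n, Fin n → OrderedTree // treeType (node (List.ofFn x.2)) = m} :=
        equivSigmaTuple.subtypeEquivOfSubtype'
    _ ≃ Σ n, {v : Fin n → OrderedTree // treeType (node (List.ofFn v)) = m} :=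
        Equiv.subtypeSigmaEquivSigmaSubtype _
    _ ≃ Σ n : ℕ+, {v : Fin n → OrderedTree // treeType (node (List.ofFn v)) = m} :=
        (Equiv.sigmaSubtypeEquivOfSubset _ _ hpos).symm
    _ ≃ _ := Equiv.sigmaCongrRight fun n =>
        Equiv.subtypeEquivRight fun v => by rw [treeType_node_ofFn]

theorem finite_tuples_of_finite_treeType_lt {m : ℕ+ →₀ ℕ}
    (hfin : ∀ m' < m, Finite {τ // treeType τ = m'}) (n : ℕ+) :
    Finite {v : Fin n → OrderedTree // Finsupp.single n 1 + ∑ i, treeType (v i) = m} := by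
  have : Finite {f : Fin n → (ℕ+ →₀ ℕ) // Finsupp.single n 1 + ∑ i, f i = m} :=
    Set.Finite.to_subtype <| (Set.Finite.pi fun _ => Set.finite_Iic m).subset
      fun f hf => Set.mem_univ_pi.2 fun i => (Finsupp.lt_of_single_add_sum_eq hf i).le
  have (f : {f : Fin n → (ℕ+ →₀ ℕ) // Finsupp.single n 1 + ∑ i, f i = m}) (i : Fin n) :
      Finite {τ // treeType τ = f.1 i} :=
    hfin _ (Finsupp.lt_of_single_add_sum_eq f.2 i)
  exact Finite.of_equiv _ (Equiv.piSubtypeFiberEquiv treeType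
    fun f => Finsupp.single n 1 + ∑ i, f i = m).symm

theorem finite_treeType_eq (m : ℕ+ →₀ ℕ) : Finite {τ // treeType τ = m} := by
  induction m using WellFoundedLT.induction with
  | _ m ih =>
  rcases eq_or_ne m 0 with rfl | hm
  · simp_rw [treeType_eq_zero_iff]
    infer_instance
  have hsupp (n : ℕ+)
      (v : {v : Fin n → OrderedTree // Finsupp.single n 1 + ∑ i, treeType (v i) = m}) :
      n ∈ m.support := by
    simp [← v.2]
  have := finite_tuples_of_finite_treeType_lt ih
  exact Finite.of_equiv _ ((Equiv.sigmaSubtypeEquivOfSubset _ (· ∈ m.support) hsupp).trans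
    (fiberTreeTypeEquiv m hm).symm)

end OrderedTree

/-- `T_0 = 1` and for `m ≠ 0`,
`T_m = Σ_{n ≥ 1} Σ_{(m₁,…,mₙ) : eₙ + m₁ + ⋯ + mₙ = m} Π_i T_{mᵢ}`. -/
theorem treeCount_recurrence :
    treeCount 0 = 1 ∧
      ∀ m : ℕ+ →₀ ℕ, m ≠ 0 →
        treeCount m =
          ∑ᶠ n : ℕ+, ∑ᶠ (f : Fin (n : ℕ) → (ℕ+ →₀ ℕ))
            (_ : Finsupp.single n 1 + ∑ i, f i = m), ∏ i, treeCount (f i) := by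
  refine ⟨OrderedTree.treeCount_zero, fun m hm => ?_⟩
  have := OrderedTree.finite_treeType_eq m
  have := Finite.of_equiv _ (OrderedTree.fiberTreeTypeEquiv m hm)
  have := OrderedTree.finite_tuples_of_finite_treeType_lt (m := m) fun m' _ =>
    OrderedTree.finite_treeType_eq m'
  rw [OrderedTree.treeCount_eq_card, Nat.card_congr (OrderedTree.fiberTreeTypeEquiv m hm)]
  simp only [Nat.card_sigma_eq_finsum]
  refine finsum_congr fun n => ?_
  rw [Nat.card_subtype_pi_eq_finsum_prod OrderedTree.treeType
    fun f => Finsupp.single n 1 + ∑ i, f i = m]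
  simp_rw [OrderedTree.treeCount_eq_card]
end

section
/- Suppose g, g′ : (ℕ+ →₀ ℕ) → ℚ both satisfy: for every finitely supported m : ℕ+ →₀ ℕ with m ≠ 0, C_m = Σ_{n ≥ 1 with m(n) ≥ 1} g(m − e_n), and likewise C_m = Σ_{n ≥ 1 with m(n) ≥ 1} g′(m − e_n). Then g = g′. (That is, the Geode coefficients are uniquely determined by the factorisation S = 1 + (t_1 + t_2 + ⋯)·G.) -/
namespace Finsupp

variable {ι : Type*}

theorem eq_of_sum_sub_single_eq {M : Type*} [AddCancelCommMonoid M] [DecidableEq ι]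
    (w : ι → ℕ) (i₀ : ι) (hw : ∀ i ≠ i₀, w i₀ < w i) {f f' : (ι →₀ ℕ) → M}
    (h : ∀ m : ι →₀ ℕ, m ≠ 0 →
      ∑ i ∈ m.support, f (m - single i 1) = ∑ i ∈ m.support, f' (m - single i 1)) :
    f = f' := by
  funext k
  induction hk : weight w k using Nat.strong_induction_on generalizing k with
  | _ d ih =>
    set m := k + single i₀ 1
    have hi₀ : i₀ ∈ m.support := by simp [m]
    have hm : m - single i₀ 1 = k := add_tsub_cancel_right k _
    have hrest : ∀ i ∈ m.support.erase i₀, f (m - single i 1) = f' (m - single i 1) := by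
      intro i hi
      have hwi := weight_sub_single_add (w := w) (mem_support_iff.1 (Finset.mem_of_mem_erase hi))
      have hwm : weight w m = d + w i₀ := by simp [m, hk, weight_single]
      have hlt := hw i (Finset.ne_of_mem_erase hi)
      exact ih _ (by omega) _ rfl
    have hsum := h m (by simp [m])
    rw [← Finset.add_sum_erase _ _ hi₀, ← Finset.add_sum_erase _ _ hi₀, hm,
      Finset.sum_congr rfl hrest] at hsum
    exact add_right_cancel hsum

end Finsupp

/-- the Geode coefficients are uniquely determined by the factorisation
`S = 1 + (t₁ + t₂ + ⋯)·G`: any two solutions `g, g'` of the coefficient recurrence agree. -/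
theorem geode_unique (g g' : (ℕ+ →₀ ℕ) → ℚ)
    (hg : ∀ m : ℕ+ →₀ ℕ, m ≠ 0 →
      (hyperCatalan m : ℚ) = ∑ n ∈ m.support, g (m - Finsupp.single n 1))
    (hg' : ∀ m : ℕ+ →₀ ℕ, m ≠ 0 →
      (hyperCatalan m : ℚ) = ∑ n ∈ m.support, g' (m - Finsupp.single n 1)) :
    g = g' :=
  Finsupp.eq_of_sum_sub_single_eq (fun n : ℕ+ => (n : ℕ)) 1
    (fun n hn => PNat.coe_lt_coe 1 n |>.2 ((one_le (a := n)).lt_of_ne hn.symm))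
    fun m hm => (hg m hm).symm.trans (hg' m hm)
end

section
/- There exists a function G : (ℕ+ →₀ ℕ) → ℕ (taking nonnegative integer values) such that for every finitely supported m : ℕ+ →₀ ℕ with m ≠ 0, C_m = Σ_{n ≥ 1 with m(n) ≥ 1} G(m − e_n). (This is the Wildberger–Rubine factorisation S = 1 + (t_1 + t_2 + ⋯)·G with G having nonnegative integer coefficients.) -/
/-!
Write `S = ∑ₘ C_m tᵐ`. The numbers `powCoeff n m`, defined by the recurrence
`S^(n+1) = S^n + ∑ⱼ tⱼ S^(n+j)` that the coefficients of the powers of `S` should obey, satisfy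
`powCoeff (n+1) m = (n+1) (∑ k m_k + n)! / ((n + 1 + ∑ (k-1) m_k)! ∏ m_k!)` (induction on `m`),
so `powCoeff 1 m = C_m`; and `powCoeff (a+b)` is the convolution of `powCoeff a` and `powCoeff b`,
so `powCoeff n` lists the coefficients of `S^n`. Hence `S = 1 + ∑ⱼ tⱼ S^j`.

Put `B = S - 1`. Since `S^j = 1 + (1 + S + ⋯ + S^(j-1)) B`, we get `B = u + A B` with
`u = ∑ⱼ tⱼ` and `A = ∑ⱼ tⱼ (1 + S + ⋯ + S^(j-1))`. As `A` has no constant term, `X = u + A X`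
has only one solution, and `u G` with `G = ∑ₖ Aᵏ` is one; `G` has coefficients in `ℕ`
because `A` does.
-/

open Finsupp MvPowerSeries MvPowerSeries.WithPiTopology

namespace MvPowerSeries

variable {σ R : Type*} [CommSemiring R]

theorem coeff_X_mul' (m : σ →₀ ℕ) (j : σ) (f : MvPowerSeries σ R) :
    coeff m (X j * f) = if m j = 0 then 0 else coeff (m - single j 1) f := by
  simp [X_def, coeff_monomial_mul, Nat.one_le_iff_ne_zero]

section PiTopology

variable [TopologicalSpace R]

theorem summable_X_mul (F : σ → MvPowerSeries σ R) : Summable fun j ↦ X j * F j := by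
  refine summable_iff_summable_coeff.2 fun m ↦ summable_of_hasFiniteSupport ?_
  refine m.support.finite_toSet.subset fun j hj ↦ ?_
  by_contra h
  simp_all [coeff_X_mul']

variable [T2Space R]

theorem coeff_tsum_X_mul (F : σ → MvPowerSeries σ R) (m : σ →₀ ℕ) :
    coeff m (∑' j, X j * F j) = ∑ j ∈ m.support, coeff (m - single j 1) (F j) := by
  have h := hasSum_iff_hasSum_coeff.1 (summable_X_mul F).hasSum m
  rw [← h.tsum_eq, tsum_eq_sum (s := m.support) fun j hj ↦ by simp_all [coeff_X_mul']]
  exact Finset.sum_congr rfl fun j hj ↦ by simp_all [coeff_X_mul']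

variable [IsTopologicalSemiring R]

theorem tsum_X_mul_mul (F : σ → MvPowerSeries σ R) (f : MvPowerSeries σ R) :
    (∑' j, X j * F j) * f = ∑' j, X j * (F j * f) := by
  simp only [← mul_assoc]
  exact ((summable_X_mul F).tsum_mul_right f).symm

theorem tsum_X_mul_add (F G : σ → MvPowerSeries σ R) :
    ∑' j, X j * (F j + G j) = ∑' j, X j * F j + ∑' j, X j * G j := by
  simp only [mul_add]
  exact (summable_X_mul F).tsum_add (summable_X_mul G)

theorem tsum_pow_eq_one_add_mul {A : MvPowerSeries σ R} (hA : constantCoeff A = 0) :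
    ∑' k, A ^ k = 1 + A * ∑' k, A ^ k := by
  have hsum := summable_pow_of_constantCoeff_eq_zero hA
  calc ∑' k, A ^ k = A ^ 0 + ∑' k, A ^ (k + 1) :=
        tsum_eq_zero_add' (by simpa only [pow_succ'] using hsum.mul_left A)
    _ = 1 + A * ∑' k, A ^ k := by simp only [pow_zero, pow_succ', hsum.tsum_mul_left]

end PiTopology

theorem eq_of_eq_add_mul_of_constantCoeff_eq_zero {A u X Y : MvPowerSeries σ ℕ}
    (hA : constantCoeff A = 0) (hX : X = u + A * X) (hY : Y = u + A * Y) : X = Y := by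
  let ι := map (Nat.castRingHom ℤ) (σ := σ)
  have hι : Function.Injective ι := fun f g h ↦ ext fun m ↦ by
    simpa [ι] using congrArg (coeff m) h
  have hunit : IsUnit (1 - ι A) := by
    simp [isUnit_iff_constantCoeff, ι, hA]
  apply hι
  have hX' := congrArg ι hX
  have hY' := congrArg ι hY
  simp only [map_add, map_mul] at hX' hY'
  rw [← sub_eq_zero, ← hunit.mul_right_eq_zero]
  linear_combination hX' - hY'

theorem exists_eq_one_add_tsum_X_mul {S : MvPowerSeries σ ℕ} (e : σ → ℕ)
    (hS : S = 1 + ∑' j, X j * S ^ e j) : ∃ G, S = 1 + ∑' j, X j * G := by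
  set B := ∑' j, X j * S ^ e j
  set A := ∑' j, X j * ∑ k ∈ Finset.range (e j), S ^ k
  set u := ∑' j : σ, X j * (1 : MvPowerSeries σ ℕ)
  have hA : constantCoeff A = 0 := by
    rw [← coeff_zero_eq_constantCoeff_apply, coeff_tsum_X_mul]
    simp
  have hB : B = u + A * B := by
    have hpow (j : σ) : S ^ e j = (∑ k ∈ Finset.range (e j), S ^ k) * B + 1 := by
      rw [hS, add_comm 1 B, geom_sum_mul_add]
    calc B = ∑' j, X j * ((∑ k ∈ Finset.range (e j), S ^ k) * B + 1) := by
          simp only [B, ← hpow]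
      _ = u + A * B := by rw [tsum_X_mul_add, tsum_X_mul_mul, add_comm]
  have huG : u * ∑' k, A ^ k = u + A * (u * ∑' k, A ^ k) := by
    conv_lhs => rw [tsum_pow_eq_one_add_mul hA]
    ring
  refine ⟨∑' k, A ^ k, ?_⟩
  rw [hS, eq_of_eq_add_mul_of_constantCoeff_eq_zero hA hB huG, tsum_X_mul_mul]
  simp only [one_mul]

end MvPowerSeries

namespace Finsupp

open Nat

variable {σ : Type*} {m : σ →₀ ℕ} {j : σ}

theorem sub_single_one_lt (hj : j ∈ m.support) : m - single j 1 < m := by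
  conv_rhs => rw [← sub_add_single_one_cancel (mem_support_iff.1 hj)]
  exact lt_add_of_pos_right _ (pos_iff_ne_zero.2 (single_ne_zero.2 one_ne_zero))

theorem degree_sub_single_one (hj : j ∈ m.support) : degree (m - single j 1) + 1 = degree m := by
  conv_rhs => rw [← sub_add_single_one_cancel (mem_support_iff.1 hj)]
  rw [map_add, degree_single]

theorem weight_sub_single_one (w : σ → ℕ) (hj : j ∈ m.support) :
    weight w (m - single j 1) + w j = weight w m := by
  conv_rhs => rw [← sub_add_single_one_cancel (mem_support_iff.1 hj)]
  rw [map_add, weight_single, one_smul]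

def factorialProd (m : σ →₀ ℕ) : ℕ := m.prod fun _ k ↦ k !

theorem factorialProd_pos (m : σ →₀ ℕ) : 0 < factorialProd m :=
  Finset.prod_pos fun _ _ ↦ factorial_pos _

theorem factorialProd_eq_mul (hj : j ∈ m.support) :
    factorialProd m = factorialProd (m - single j 1) * m j := by
  have hmj := mem_support_iff.1 hj
  have herase : (m - single j 1).erase j = m.erase j := by
    ext i
    rcases eq_or_ne i j with rfl | hij
    · simp
    · simp [erase_ne hij, single_eq_of_ne hij]
  unfold factorialProd
  rw [← mul_prod_erase m j _ hj,
    ← mul_prod_erase' (m - single j 1) j _ fun _ ↦ factorial_zero, herase, tsub_apply,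
    single_eq_same, ← mul_factorial_pred hmj]
  ring

end Finsupp

namespace HyperCatalan

open Nat

noncomputable def powCoeff : ℕ → (ℕ+ →₀ ℕ) → ℕ
  | 0, m => if m = 0 then 1 else 0
  | n + 1, m => powCoeff n m + ∑ j ∈ m.support.attach, powCoeff (n + j) (m - single j.1 1)
termination_by n m => (degree m, n)
decreasing_by
  · exact Prod.Lex.right _ (lt_add_one n)
  · exact Prod.Lex.left _ _ (by rw [← degree_sub_single_one j.2]; exact lt_add_one _)

theorem powCoeff_zero_of_ne_zero {m : ℕ+ →₀ ℕ} (hm : m ≠ 0) : powCoeff 0 m = 0 := by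
  simp [powCoeff, hm]

theorem powCoeff_succ (n : ℕ) (m : ℕ+ →₀ ℕ) :
    powCoeff (n + 1) m = powCoeff n m + ∑ j ∈ m.support, powCoeff (n + j) (m - single j 1) := by
  rw [powCoeff, Finset.sum_attach m.support fun j ↦ powCoeff (n + j) (m - single j 1)]

theorem powCoeff_zero_right (n : ℕ) : powCoeff n 0 = 1 := by
  induction n with
  | zero => simp [powCoeff]
  | succ n ih => simp [powCoeff_succ, ih]

theorem powCoeff_sub_single_one_mul {m : ℕ+ →₀ ℕ} {j : ℕ+} (hj : j ∈ m.support)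
    {W : ℕ} (hW : weight PNat.val m = W + 1) (n : ℕ)
    (ih : ∀ n, powCoeff (n + 1) (m - single j 1) *
      ((n + 1 + weight PNat.natPred (m - single j 1))! * factorialProd (m - single j 1)) =
        (n + 1) * (weight PNat.val (m - single j 1) + n)!) :
    powCoeff (n + j) (m - single j 1) * ((n + 1 + weight PNat.natPred m)! * factorialProd m) =
      (n + j) * m j * (W + n)! := by
  have hval := weight_sub_single_one PNat.val hj
  have hpred := weight_sub_single_one PNat.natPred hj
  have hj1 := PNat.natPred_add_one j
  have h := ih (n + j.natPred)
  rw [show n + j.natPred + 1 = n + j by omega,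
    show n + j + weight PNat.natPred (m - single j 1) = n + 1 + weight PNat.natPred m by
      omega,
    show weight PNat.val (m - single j 1) + (n + j.natPred) = W + n by
      omega] at h
  rw [factorialProd_eq_mul hj, ← mul_assoc _ _ (m j), ← mul_assoc, h, mul_right_comm]

theorem weight_natPred_add_degree (m : ℕ+ →₀ ℕ) :
    weight PNat.natPred m + degree m = weight PNat.val m := by
  induction m using Finsupp.induction_linear with
  | zero => simp
  | add f g hf hg => simp only [map_add]; omega
  | single i c =>
    simp only [weight_single, degree_single, smul_eq_mul, ← PNat.natPred_add_one i]
    ring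

theorem sum_powCoeff_sub_single_one_mul {m : ℕ+ →₀ ℕ} {W : ℕ}
    (hW : weight PNat.val m = W + 1) (n : ℕ)
    (ih : ∀ j ∈ m.support, ∀ n, powCoeff (n + 1) (m - single j 1) *
      ((n + 1 + weight PNat.natPred (m - single j 1))! * factorialProd (m - single j 1)) =
        (n + 1) * (weight PNat.val (m - single j 1) + n)!) :
    (∑ j ∈ m.support, powCoeff (n + j) (m - single j 1)) *
        ((n + 1 + weight PNat.natPred m)! * factorialProd m) =
      (n * degree m + W + 1) * (W + n)! := by
  rw [Finset.sum_mul,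
    Finset.sum_congr rfl fun j hj ↦ powCoeff_sub_single_one_mul hj hW n (ih j hj),
    ← Finset.sum_mul, add_assoc, ← hW]
  simp only [add_mul, Finset.sum_add_distrib, degree_apply, Finset.mul_sum, weight_apply,
    Finsupp.sum, smul_eq_mul, mul_comm (m _)]

theorem powCoeff_succ_mul (m : ℕ+ →₀ ℕ) (n : ℕ) :
    powCoeff (n + 1) m * ((n + 1 + weight PNat.natPred m)! * factorialProd m) =
      (n + 1) * (weight PNat.val m + n)! := by
  induction m using WellFoundedLT.induction generalizing n with
  | ind m ihm =>
  rcases eq_or_ne m 0 with rfl | hm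
  · simp [powCoeff_zero_right, factorialProd, factorial_succ]
  have hdeg := weight_natPred_add_degree m
  obtain ⟨W, hW⟩ : ∃ W, weight PNat.val m = W + 1 :=
    exists_eq_add_one.2 (by have := (degree_eq_zero_iff m).not.2 hm; omega)
  have hsum n := sum_powCoeff_sub_single_one_mul hW n fun j hj ↦ ihm _ (sub_single_one_lt hj)
  induction n with
  | zero =>
    rw [powCoeff_succ, powCoeff_zero_of_ne_zero hm, zero_add, hsum, hW]
    simp [factorial_succ]
  | succ k ihk =>
    rw [powCoeff_succ, add_mul, hsum, hW]
    rw [hW] at ihk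
    have hfac : (k + 1 + 1 + weight PNat.natPred m)! =
        (k + 2 + weight PNat.natPred m) * (k + 1 + weight PNat.natPred m)! := by
      rw [show k + 1 + 1 + weight PNat.natPred m = k + 1 + weight PNat.natPred m + 1 by ring,
        factorial_succ]
    have hfac' : (W + 1 + (k + 1))! = (W + k + 2) * (W + 1 + k)! := by
      rw [show W + 1 + (k + 1) = W + 1 + k + 1 by ring, factorial_succ]
      ring
    rw [hfac, mul_assoc, mul_left_comm, ihk, hfac', show W + (k + 1) = W + 1 + k by ring]
    zify at hdeg hW ⊢
    linear_combination (k + 1) * ((W + 1 + k)! : ℤ) * (hdeg + hW)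

theorem hyperCatalan_eq_powCoeff_one (m : ℕ+ →₀ ℕ) : hyperCatalan m = powCoeff 1 m := by
  have h := powCoeff_succ_mul m 0
  rw [zero_add, one_mul, add_zero] at h
  have hval : (m.sum fun n k ↦ (n : ℕ) * k) = weight PNat.val m :=
    Finsupp.sum_congr fun n _ ↦ mul_comm _ _
  have hpred : (m.sum fun n k ↦ ((n : ℕ) - 1) * k) = weight PNat.natPred m :=
    Finsupp.sum_congr fun n _ ↦ mul_comm _ _
  rw [hyperCatalan, hval, hpred]
  change _ / (_ * factorialProd m) = _
  rw [← h]
  exact Nat.mul_div_cancel _ (Nat.mul_pos (factorial_pos _) (factorialProd_pos m))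

noncomputable def powSeries (n : ℕ) : MvPowerSeries ℕ+ ℕ := fun m ↦ powCoeff n m

theorem coeff_powSeries (n : ℕ) (m : ℕ+ →₀ ℕ) :
    coeff m (powSeries n) = powCoeff n m := rfl

theorem powSeries_zero : powSeries 0 = 1 := by
  ext m
  simp [coeff_powSeries, powCoeff, coeff_one]

theorem powSeries_succ (n : ℕ) :
    powSeries (n + 1) = powSeries n + ∑' j : ℕ+, X j * powSeries (n + j) := by
  ext m
  simp only [map_add, coeff_tsum_X_mul, coeff_powSeries, powCoeff_succ]

theorem powSeries_add (a b : ℕ) : powSeries (a + b) = powSeries a * powSeries b := by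
  ext m
  induction m using WellFoundedLT.induction generalizing a b with
  | ind m ihm =>
  induction b with
  | zero => simp [powSeries_zero]
  | succ k ihk =>
    rw [← add_assoc, powSeries_succ, powSeries_succ, mul_add, map_add, map_add, ihk,
      mul_comm (powSeries a) (∑' _, _), tsum_X_mul_mul, coeff_tsum_X_mul, coeff_tsum_X_mul]
    refine congrArg _ (Finset.sum_congr rfl fun j hj ↦ ?_)
    rw [← ihm _ (sub_single_one_lt hj), add_comm _ a, add_assoc]

theorem powSeries_eq_pow (n : ℕ) : powSeries n = powSeries 1 ^ n := by
  induction n with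
  | zero => exact powSeries_zero
  | succ n ih => rw [powSeries_add, ih, pow_succ]

end HyperCatalan

noncomputable def hyperCatalanSeries : MvPowerSeries ℕ+ ℕ := fun m ↦ hyperCatalan m

theorem coeff_hyperCatalanSeries (m : ℕ+ →₀ ℕ) :
    coeff m hyperCatalanSeries = hyperCatalan m := rfl

theorem hyperCatalanSeries_eq_one_add_tsum :
    hyperCatalanSeries = 1 + ∑' j : ℕ+, X j * hyperCatalanSeries ^ (j : ℕ) := by
  have hS : hyperCatalanSeries = HyperCatalan.powSeries 1 :=
    ext HyperCatalan.hyperCatalan_eq_powCoeff_one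
  simpa [hS, HyperCatalan.powSeries_zero, ← HyperCatalan.powSeries_eq_pow] using
    HyperCatalan.powSeries_succ 0

/-- the Wildberger–Rubine factorisation `S = 1 + (t₁ + t₂ + ⋯)·G`
with `G` having nonnegative integer coefficients. -/
theorem geode_exists :
    ∃ G : (ℕ+ →₀ ℕ) → ℕ, ∀ m : ℕ+ →₀ ℕ, m ≠ 0 →
      hyperCatalan m = ∑ n ∈ m.support, G (m - Finsupp.single n 1) := by
  obtain ⟨G, hG⟩ := exists_eq_one_add_tsum_X_mul _ hyperCatalanSeries_eq_one_add_tsum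
  refine ⟨fun m ↦ coeff m G, fun m hm ↦ ?_⟩
  simpa [coeff_hyperCatalanSeries, coeff_tsum_X_mul, coeff_one, hm] using congrArg (coeff m) hG
end
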